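/- Let B ≥ 1 and let a, b : ℕ → ℝ satisfy a 0 = 1, a n > 0 and max(a n, |b n|) ≤ B for all n ≥ 1, and fix N ≥ 1. Let z ∈ ℂ with 0 < |z| < 1/(3B+1) and set λ := z + 1/z. Then for every 0 ≤ n ≤ N+1 the series v̂_n := −∑_{t=0}^∞ z^t v^δ_{n,t} converges absolutely, v̂_0 = −1, v̂_{N+1} = 0, and v̂ satisfies the Jacobi difference equation a_{n−1} v̂_{n−1} + b_n v̂_n + a_n v̂_{n+1} = λ v̂_n for all 1 ≤ n ≤ N. -/

import Mathlib

/-- `v` is the solution of the finite discrete-time dynamical system (on sites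
`0,…,N+1`, with Dirichlet condition at `N+1`) with coefficients `a`, `b` and
boundary control `g`. -/
def IsSolV (N : ℕ) (a b g : ℕ → ℝ) (v : ℕ → ℕ → ℝ) : Prop :=
  (∀ n, 1 ≤ n → n ≤ N + 1 → v n 0 = 0) ∧
  (∀ t, v 0 t = g t) ∧
  (∀ t, v (N + 1) t = 0) ∧
  (∀ n t, 1 ≤ n → n ≤ N →
    v n (t + 1) + v n (t - 1) - a n * v (n + 1) t - a (n - 1) * v (n - 1) t
      - b n * v n t = 0)

/-- The boundary control `δ = (1,0,0,…)`. -/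
def deltaCtrl : ℕ → ℝ := fun t => if t = 0 then 1 else 0

/-!
The recurrence writes `v_{n,t+1}` as a combination of three values at time `t`, with
coefficients bounded by `B`, minus `v_{n,t-1}`; hence `|v^δ_{n,t}| ≤ (3B+1)^t` and the series
converge for `‖z‖ < 1/(3B+1)`. Multiplying the recurrence by `z^t` and summing, the time shifts
`t ↦ t ± 1` become multiplication by `z^{∓1}` (because `v^δ_{n,0} = 0` for `n ≥ 1`), which
turns the recurrence in time into the Jacobi equation with eigenvalue `z + 1/z`.
-/

section Shift

variable {𝕜 : Type*} [Field 𝕜] [TopologicalSpace 𝕜] [IsTopologicalRing 𝕜]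
  {u : ℕ → 𝕜} {z S : 𝕜}

theorem hasSum_pow_mul_succ (hz : z ≠ 0) (hu : u 0 = 0)
    (hS : HasSum (fun t => z ^ t * u t) S) :
    HasSum (fun t => z ^ t * u (t + 1)) (S / z) := by
  have hS' : HasSum (fun t => z ^ (t + 1) * u (t + 1)) S := by
    simpa [hu] using (hasSum_nat_add_iff' 1).mpr hS
  rw [div_eq_inv_mul]
  refine (hS'.mul_left z⁻¹).congr_fun fun t => ?_
  field_simp
  ring

theorem hasSum_pow_mul_pred (hu : u 0 = 0) (hS : HasSum (fun t => z ^ t * u t) S) :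
    HasSum (fun t => z ^ t * u (t - 1)) (z * S) := by
  refine (hasSum_nat_add_iff' 1).mp ?_
  simpa [hu, pow_succ, mul_assoc, mul_left_comm z] using hS.mul_left z

theorem hasSum_pow_mul_succ_add_pred (hz : z ≠ 0) (hu : u 0 = 0)
    (hS : HasSum (fun t => z ^ t * u t) S) :
    HasSum (fun t => z ^ t * (u (t + 1) + u (t - 1))) ((z + 1 / z) * S) := by
  convert (hasSum_pow_mul_succ hz hu hS).add (hasSum_pow_mul_pred hu hS) using 1
  · funext t
    ring
  · ring

end Shift

theorem summable_norm_pow_mul_of_norm_le_pow {𝕜 : Type*} [NormedField 𝕜] {u : ℕ → 𝕜}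
    {z : 𝕜} {C : ℝ} (hu : ∀ t, ‖u t‖ ≤ C ^ t) (hzC : ‖z‖ * C < 1) :
    Summable fun t => ‖z ^ t * u t‖ := by
  have hC : 0 ≤ C := (norm_nonneg _).trans (by simpa using hu 1)
  refine .of_nonneg_of_le (fun t => norm_nonneg _) (fun t => ?_)
    (summable_geometric_of_lt_one (by positivity) hzC)
  rw [norm_mul, norm_pow, mul_pow]
  gcongr
  exact hu t

theorem abs_deltaCtrl_le_pow {C : ℝ} (hC : 0 ≤ C) (t : ℕ) : |deltaCtrl t| ≤ C ^ t := by
  unfold deltaCtrl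
  split_ifs with ht
  · simp [ht]
  · simpa using pow_nonneg hC t

theorem IsSolV.abs_le_pow {N : ℕ} {a b g : ℕ → ℝ} {v : ℕ → ℕ → ℝ} {B : ℝ}
    (hv : IsSolV N a b g v) (ha : ∀ n, |a n| ≤ B) (hb : ∀ n, 1 ≤ n → |b n| ≤ B)
    (hg : ∀ t, |g t| ≤ (3 * B + 1) ^ t) :
    ∀ t n, n ≤ N + 1 → |v n t| ≤ (3 * B + 1) ^ t := by
  obtain ⟨hv0, hvg, hvN, hrec⟩ := hv
  have hB : 0 ≤ B := (abs_nonneg _).trans (ha 0)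
  have hC : 1 ≤ 3 * B + 1 := by linarith
  intro t
  induction t using Nat.strong_induction_on with
  | _ t ih =>
  intro n hn
  rcases Nat.eq_zero_or_pos n with rfl | hn1
  · exact hvg t ▸ hg t
  rcases hn.eq_or_lt with rfl | hnN
  · simp [hvN, pow_nonneg (zero_le_one.trans hC)]
  cases t with
  | zero => simp [hv0 n hn1 hn]
  | succ s =>
  have hstep : v n (s + 1) =
      a n * v (n + 1) s + a (n - 1) * v (n - 1) s + b n * v n s - v n (s - 1) := by
    linarith [hrec n s hn1 (by omega)]
  have hprev : |v n (s - 1)| ≤ (3 * B + 1) ^ s :=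
    (ih (s - 1) (by omega) n hn).trans (pow_le_pow_right₀ hC (Nat.sub_le s 1))
  calc |v n (s + 1)|
      ≤ |a n| * |v (n + 1) s| + |a (n - 1)| * |v (n - 1) s| + |b n| * |v n s|
          + |v n (s - 1)| := by
        rw [hstep, ← abs_mul, ← abs_mul, ← abs_mul]
        exact (abs_sub _ _).trans (add_le_add (abs_add_three _ _ _) le_rfl)
    _ ≤ B * (3 * B + 1) ^ s + B * (3 * B + 1) ^ s + B * (3 * B + 1) ^ s
          + (3 * B + 1) ^ s := by
        have ih_s := ih s s.lt_succ_self
        gcongr <;> first | exact hB | exact ha _ | exact hb n hn1 | exact ih_s _ (by omega)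
    _ = (3 * B + 1) ^ (s + 1) := by ring

theorem generating_function_finite_general
    (B : ℝ) (hB : 1 ≤ B) (a b : ℕ → ℝ) (ha0 : a 0 = 1)
    (hapos : ∀ n, 1 ≤ n → 0 < a n)
    (hbound : ∀ n, 1 ≤ n → max (a n) |b n| ≤ B)
    (N : ℕ)
    (v : ℕ → ℕ → ℝ) (hv : IsSolV N a b deltaCtrl v)
    (z : ℂ) (hz0 : 0 < ‖z‖) (hz : ‖z‖ < 1 / (3 * B + 1)) :
    (∀ n : ℕ, n ≤ N + 1 → Summable (fun t : ℕ => ‖z ^ t * (v n t : ℂ)‖)) ∧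
    (-∑' t : ℕ, z ^ t * (v 0 t : ℂ)) = -1 ∧
    (-∑' t : ℕ, z ^ t * (v (N + 1) t : ℂ)) = 0 ∧
    (∀ n : ℕ, 1 ≤ n → n ≤ N →
      (a (n - 1) : ℂ) * (-∑' t : ℕ, z ^ t * (v (n - 1) t : ℂ))
        + (b n : ℂ) * (-∑' t : ℕ, z ^ t * (v n t : ℂ))
        + (a n : ℂ) * (-∑' t : ℕ, z ^ t * (v (n + 1) t : ℂ))
      = (z + 1 / z) * (-∑' t : ℕ, z ^ t * (v n t : ℂ))) := by
  have ha : ∀ n, |a n| ≤ B := fun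
    | 0 => by simpa [ha0] using hB
    | n + 1 =>
      (abs_of_pos (hapos _ n.succ_pos)).trans_le (le_of_max_le_left (hbound _ n.succ_pos))
  have hgrowth := hv.abs_le_pow ha (fun n hn => le_of_max_le_right (hbound n hn))
    (abs_deltaCtrl_le_pow (by linarith))
  have hsum (n : ℕ) (hn : n ≤ N + 1) : Summable fun t : ℕ => ‖z ^ t * (v n t : ℂ)‖ :=
    summable_norm_pow_mul_of_norm_le_pow (by simpa using (hgrowth · n hn))
      ((lt_div_iff₀ (by linarith)).mp hz)
  have hv_hasSum (n : ℕ) (hn : n ≤ N + 1) := (hsum n hn).of_norm.hasSum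
  obtain ⟨hv0, hvg, hvN, hrec⟩ := hv
  refine ⟨hsum, ?_, by simp [hvN], fun n hn1 hnN => ?_⟩
  · rw [tsum_eq_single 0 fun t ht => by simp [hvg, deltaCtrl, ht]]
    simp [hvg, deltaCtrl]
  have hcomb := (((hv_hasSum (n - 1) (by omega)).mul_left (a (n - 1) : ℂ)).add
    ((hv_hasSum n (by omega)).mul_left (b n : ℂ))).add
    ((hv_hasSum (n + 1) (by omega)).mul_left (a n : ℂ))
  have hshift := hasSum_pow_mul_succ_add_pred (norm_pos_iff.mp hz0)
    (by simp [hv0 n hn1 (by omega)]) (hv_hasSum n (by omega))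
  have hterm (t : ℕ) : z ^ t * ((v n (t + 1) : ℂ) + v n (t - 1)) =
      a (n - 1) * (z ^ t * v (n - 1) t) + b n * (z ^ t * v n t) + a n * (z ^ t * v (n + 1) t) := by
    have := congrArg (Complex.ofReal) (hrec n t hn1 hnN)
    push_cast at this
    linear_combination z ^ t * this
  linear_combination (hcomb.unique (by simpa only [hterm] using hshift)).symm

/-- For `0 < |z| < 1/(3B+1)` and `λ = z + 1/z`, the generating function
`v̂_n = -∑_{t=0}^∞ z^t v^δ_{n,t}` converges absolutely, satisfies `v̂_0 = -1`,
`v̂_{N+1} = 0`, and the Jacobi difference equation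
`a_{n-1} v̂_{n-1} + b_n v̂_n + a_n v̂_{n+1} = λ v̂_n` for `1 ≤ n ≤ N`. -/
theorem generating_function_finite
    (B : ℝ) (hB : 1 ≤ B) (a b : ℕ → ℝ) (ha0 : a 0 = 1)
    (hapos : ∀ n, 1 ≤ n → 0 < a n)
    (hbound : ∀ n, 1 ≤ n → max (a n) |b n| ≤ B)
    (N : ℕ) (hN : 1 ≤ N)
    (v : ℕ → ℕ → ℝ) (hv : IsSolV N a b deltaCtrl v)
    (z : ℂ) (hz0 : 0 < ‖z‖) (hz : ‖z‖ < 1 / (3 * B + 1)) :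
    (∀ n : ℕ, n ≤ N + 1 → Summable (fun t : ℕ => ‖z ^ t * (v n t : ℂ)‖)) ∧
    (-∑' t : ℕ, z ^ t * (v 0 t : ℂ)) = -1 ∧
    (-∑' t : ℕ, z ^ t * (v (N + 1) t : ℂ)) = 0 ∧
    (∀ n : ℕ, 1 ≤ n → n ≤ N →
      (a (n - 1) : ℂ) * (-∑' t : ℕ, z ^ t * (v (n - 1) t : ℂ))
        + (b n : ℂ) * (-∑' t : ℕ, z ^ t * (v n t : ℂ))
        + (a n : ℂ) * (-∑' t : ℕ, z ^ t * (v (n + 1) t : ℂ))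
      = (z + 1 / z) * (-∑' t : ℕ, z ^ t * (v n t : ℂ))) :=
  generating_function_finite_general B hB a b ha0 hapos hbound N v hv z hz0 hz
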